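/- Let ρ₀ and ρ₁ be probability densities on R^m satisfying Gaussian-type bounds: ϱ₁(s−t₀)^{-m/2} exp(−Λ|x−x₀|²/(s−t₀)) ≤ ρ₀(s,x) ≤ ϱ₂(s−t₀)^{-m/2} exp(−λ|x−x₀|²/(s−t₀)) and the analogous bounds for ρ₁ with center (t₁,x₁), where t₀ ≤ t₁ < s ≤ T and ϱ₁ ≤ ϱ₂, λ < Λ. Then for every δ ∈ (0, T−t₁] and every k ≥ 1, the ratio φ(s,x) = ρ₁(s,x)/ρ₀(s,x) is bounded on [t₁+δ, T] × [−k,k]^m, and consequently φ ∈ L^q([t₁+δ,T] × [−k,k]^m; ρ₀(s,x)dx ds) for every q ∈ (1,∞). -/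

import Mathlib

open MeasureTheory Filter Real
open scoped ENNReal Topology

/-- Aronson-type two-sided Gaussian bounds on two densities `ρ₀, ρ₁`
(centered at `(t₀,x₀)` and `(t₁,x₁)`) imply that the ratio `φ = ρ₁/ρ₀` is bounded on
`[t₁+δ, T] × [−k,k]^m` and hence lies in `L^q` there with respect to `ρ₀(s,x) dx ds`,
for every `q ∈ (1,∞)`. -/
theorem stmt_9
    (m : ℕ) (hm : 1 ≤ m) (T t₀ t₁ : ℝ) (ht₀ : 0 ≤ t₀) (ht₀₁ : t₀ ≤ t₁) (ht₁ : t₁ < T)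
    (x₀ x₁ : Fin m → ℝ)
    (ϱ₁ ϱ₂ lam Lam : ℝ) (hϱ : 0 < ϱ₁) (hϱ' : ϱ₁ ≤ ϱ₂) (hlam : 0 < lam) (hΛ : lam < Lam)
    (ρ₀ ρ₁ : ℝ → (Fin m → ℝ) → ℝ)
    (hρ₀meas : Measurable (Function.uncurry ρ₀))
    (hρ₁meas : Measurable (Function.uncurry ρ₁))
    (hρ₀ : ∀ s ∈ Set.Ioc t₀ T, ∀ x : Fin m → ℝ,
      ϱ₁ * (s - t₀) ^ (-(m : ℝ) / 2) *
          Real.exp (-(Lam * ∑ i, (x i - x₀ i) ^ 2) / (s - t₀)) ≤ ρ₀ s x ∧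
      ρ₀ s x ≤ ϱ₂ * (s - t₀) ^ (-(m : ℝ) / 2) *
          Real.exp (-(lam * ∑ i, (x i - x₀ i) ^ 2) / (s - t₀)))
    (hρ₁ : ∀ s ∈ Set.Ioc t₁ T, ∀ x : Fin m → ℝ,
      ϱ₁ * (s - t₁) ^ (-(m : ℝ) / 2) *
          Real.exp (-(Lam * ∑ i, (x i - x₁ i) ^ 2) / (s - t₁)) ≤ ρ₁ s x ∧
      ρ₁ s x ≤ ϱ₂ * (s - t₁) ^ (-(m : ℝ) / 2) *
          Real.exp (-(lam * ∑ i, (x i - x₁ i) ^ 2) / (s - t₁))) :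
    ∀ δ ∈ Set.Ioc (0 : ℝ) (T - t₁), ∀ k : ℕ, 1 ≤ k →
      (∃ κ : ℝ, ∀ s ∈ Set.Icc (t₁ + δ) T,
        ∀ x ∈ Set.Icc (fun _ : Fin m => -(k : ℝ)) (fun _ : Fin m => (k : ℝ)),
          ρ₁ s x / ρ₀ s x ≤ κ) ∧
      (∀ q ∈ Set.Ioi (1 : ℝ),
        IntegrableOn
          (fun p : ℝ × (Fin m → ℝ) => (ρ₁ p.1 p.2 / ρ₀ p.1 p.2) ^ q * ρ₀ p.1 p.2)
          (Set.Icc (t₁ + δ) T ×ˢ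
            Set.Icc (fun _ : Fin m => -(k : ℝ)) (fun _ : Fin m => (k : ℝ)))
          volume) := by

  intro δ hδ k hk
  have hδ0 : 0 < δ := hδ.1
  have hϱ₂ : 0 < ϱ₂ := hϱ.trans_le hϱ'
  have hLam : 0 < Lam := hlam.trans hΛ
  have he : -(m : ℝ) / 2 ≤ 0 := by
    have : (0:ℝ) ≤ (m:ℝ) := Nat.cast_nonneg m
    linarith
  have hTt₀ : 0 < T - t₀ := by linarith
  set B₀ : ℝ := ∑ i, ((k : ℝ) + |x₀ i|) ^ 2 with hB₀def
  have hB₀ : 0 ≤ B₀ := Finset.sum_nonneg fun i _ => sq_nonneg _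
  set c : ℝ := ϱ₁ * (T - t₀) ^ (-(m : ℝ) / 2) * Real.exp (-(Lam * B₀) / δ) with hcdef
  set C : ℝ := ϱ₂ * δ ^ (-(m : ℝ) / 2) with hCdef
  have hc0 : 0 < c := by
    apply mul_pos (mul_pos hϱ (Real.rpow_pos_of_pos hTt₀ _)) (Real.exp_pos _)
  have hC0 : 0 < C := mul_pos hϱ₂ (Real.rpow_pos_of_pos hδ0 _)
  -- bounds on the rectangle
  have key : ∀ s ∈ Set.Icc (t₁ + δ) T,
      ∀ x ∈ Set.Icc (fun _ : Fin m => -(k : ℝ)) (fun _ : Fin m => (k : ℝ)),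
      c ≤ ρ₀ s x ∧ ρ₀ s x ≤ C ∧ 0 ≤ ρ₁ s x ∧ ρ₁ s x ≤ C := by
    intro s hs x hx
    have hst₁ : t₁ < s := by have := hs.1; linarith
    have hst₀ : t₀ < s := lt_of_le_of_lt ht₀₁ hst₁
    have hδs₀ : δ ≤ s - t₀ := by have := hs.1; linarith
    have hδs₁ : δ ≤ s - t₁ := by have := hs.1; linarith
    have hs₀pos : 0 < s - t₀ := hδ0.trans_le hδs₀
    have hs₁pos : 0 < s - t₁ := hδ0.trans_le hδs₁
    obtain ⟨h0l, h0u⟩ := hρ₀ s ⟨hst₀, hs.2⟩ x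
    obtain ⟨h1l, h1u⟩ := hρ₁ s ⟨hst₁, hs.2⟩ x
    have hSx : ∑ i, (x i - x₀ i) ^ 2 ≤ B₀ := by
      apply Finset.sum_le_sum
      intro i _
      have h1 : |x i| ≤ (k : ℝ) := abs_le.mpr ⟨hx.1 i, hx.2 i⟩
      have h2 : |x i - x₀ i| ≤ (k : ℝ) + |x₀ i| :=
        (abs_sub _ _).trans (add_le_add h1 le_rfl)
      calc (x i - x₀ i) ^ 2 = |x i - x₀ i| ^ 2 := (sq_abs _).symm
        _ ≤ ((k : ℝ) + |x₀ i|) ^ 2 := by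
            exact pow_le_pow_left₀ (abs_nonneg _) h2 2
    have hS0 : 0 ≤ ∑ i, (x i - x₀ i) ^ 2 := Finset.sum_nonneg fun i _ => sq_nonneg _
    have hS1 : 0 ≤ ∑ i, (x i - x₁ i) ^ 2 := Finset.sum_nonneg fun i _ => sq_nonneg _
    refine ⟨?_, ?_, ?_, ?_⟩
    · -- lower bound for ρ₀
      refine le_trans ?_ h0l
      have hr : (T - t₀) ^ (-(m : ℝ) / 2) ≤ (s - t₀) ^ (-(m : ℝ) / 2) :=
        Real.rpow_le_rpow_of_nonpos hs₀pos (by linarith [hs.2]) he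
      have hexp : Real.exp (-(Lam * B₀) / δ) ≤
          Real.exp (-(Lam * ∑ i, (x i - x₀ i) ^ 2) / (s - t₀)) := by
        apply Real.exp_le_exp.mpr
        rw [div_le_div_iff₀ hδ0 hs₀pos]
        nlinarith [mul_le_mul_of_nonneg_left hSx hLam.le,
          mul_le_mul_of_nonneg_left hδs₀ (mul_nonneg hLam.le hS0)]
      calc c ≤ ϱ₁ * (s - t₀) ^ (-(m : ℝ) / 2) * Real.exp (-(Lam * B₀) / δ) := by
              apply mul_le_mul_of_nonneg_right _ (Real.exp_pos _).le
              exact mul_le_mul_of_nonneg_left hr hϱ.le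
        _ ≤ ϱ₁ * (s - t₀) ^ (-(m : ℝ) / 2) *
              Real.exp (-(Lam * ∑ i, (x i - x₀ i) ^ 2) / (s - t₀)) := by
              apply mul_le_mul_of_nonneg_left hexp
              positivity
    · -- upper bound for ρ₀
      refine h0u.trans ?_
      have hr : (s - t₀) ^ (-(m : ℝ) / 2) ≤ δ ^ (-(m : ℝ) / 2) :=
        Real.rpow_le_rpow_of_nonpos hδ0 hδs₀ he
      have hexp : Real.exp (-(lam * ∑ i, (x i - x₀ i) ^ 2) / (s - t₀)) ≤ 1 := by
        apply Real.exp_le_one_iff.mpr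
        apply div_nonpos_of_nonpos_of_nonneg _ hs₀pos.le
        simp only [neg_nonpos]
        positivity
      calc ϱ₂ * (s - t₀) ^ (-(m : ℝ) / 2) *
            Real.exp (-(lam * ∑ i, (x i - x₀ i) ^ 2) / (s - t₀))
          ≤ ϱ₂ * (s - t₀) ^ (-(m : ℝ) / 2) * 1 := by
            apply mul_le_mul_of_nonneg_left hexp
            positivity
        _ = ϱ₂ * (s - t₀) ^ (-(m : ℝ) / 2) := mul_one _
        _ ≤ C := mul_le_mul_of_nonneg_left hr hϱ₂.le
    · -- nonnegativity of ρ₁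
      refine le_trans ?_ h1l
      positivity
    · -- upper bound for ρ₁
      refine h1u.trans ?_
      have hr : (s - t₁) ^ (-(m : ℝ) / 2) ≤ δ ^ (-(m : ℝ) / 2) :=
        Real.rpow_le_rpow_of_nonpos hδ0 hδs₁ he
      have hexp : Real.exp (-(lam * ∑ i, (x i - x₁ i) ^ 2) / (s - t₁)) ≤ 1 := by
        apply Real.exp_le_one_iff.mpr
        apply div_nonpos_of_nonpos_of_nonneg _ hs₁pos.le
        simp only [neg_nonpos]
        positivity
      calc ϱ₂ * (s - t₁) ^ (-(m : ℝ) / 2) *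
            Real.exp (-(lam * ∑ i, (x i - x₁ i) ^ 2) / (s - t₁))
          ≤ ϱ₂ * (s - t₁) ^ (-(m : ℝ) / 2) * 1 := by
            apply mul_le_mul_of_nonneg_left hexp
            positivity
        _ = ϱ₂ * (s - t₁) ^ (-(m : ℝ) / 2) := mul_one _
        _ ≤ C := mul_le_mul_of_nonneg_left hr hϱ₂.le
  have hratio : ∀ s ∈ Set.Icc (t₁ + δ) T,
      ∀ x ∈ Set.Icc (fun _ : Fin m => -(k : ℝ)) (fun _ : Fin m => (k : ℝ)),
      ρ₁ s x / ρ₀ s x ≤ C / c ∧ 0 ≤ ρ₁ s x / ρ₀ s x := by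
    intro s hs x hx
    obtain ⟨hl, hu, h1n, h1u⟩ := key s hs x hx
    have hρ₀pos : 0 < ρ₀ s x := hc0.trans_le hl
    exact ⟨div_le_div₀ hC0.le h1u hc0 hl, div_nonneg h1n hρ₀pos.le⟩
  constructor
  · exact ⟨C / c, fun s hs x hx => (hratio s hs x hx).1⟩
  · intro q hq
    have hq1 : (1 : ℝ) < q := hq
    have hq0 : 0 ≤ q := by linarith
    set S := Set.Icc (t₁ + δ) T ×ˢ
      Set.Icc (fun _ : Fin m => -(k : ℝ)) (fun _ : Fin m => (k : ℝ)) with hSdef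
    have hSmeas : MeasurableSet S := measurableSet_Icc.prod measurableSet_Icc
    have hSfin : volume S ≠ ⊤ :=
      ((isCompact_Icc.prod isCompact_Icc).measure_lt_top).ne
    have hmeas : Measurable fun p : ℝ × (Fin m → ℝ) =>
        (ρ₁ p.1 p.2 / ρ₀ p.1 p.2) ^ q * ρ₀ p.1 p.2 := by
      have h0 : Measurable fun p : ℝ × (Fin m → ℝ) => ρ₀ p.1 p.2 := hρ₀meas
      have h1 : Measurable fun p : ℝ × (Fin m → ℝ) => ρ₁ p.1 p.2 := hρ₁meas
      exact (((Real.continuous_rpow_const hq0).measurable).comp (h1.div h0)).mul h0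
    apply Measure.integrableOn_of_bounded (M := (C / c) ^ q * C) hSfin
      hmeas.aestronglyMeasurable
    filter_upwards [self_mem_ae_restrict hSmeas] with p hp
    obtain ⟨hps, hpx⟩ := hp
    obtain ⟨hl, hu, h1n, h1u⟩ := key p.1 hps p.2 hpx
    obtain ⟨hru, hrn⟩ := hratio p.1 hps p.2 hpx
    have hρ₀pos : 0 < ρ₀ p.1 p.2 := hc0.trans_le hl
    rw [Real.norm_of_nonneg (by positivity)]
    apply mul_le_mul _ hu hρ₀pos.le (by positivity)
    exact Real.rpow_le_rpow hrn hru hq0
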